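/- arXiv:1502.07073 — 2 statements merged into one kernel-verified Lean document; each statement's English description precedes it below -/
import Mathlib

section
/- Let I = [q,s] be an interval in the geometric interval family 𝓘, and let I' = [q', q−1] be an interval (of positive natural numbers) whose right endpoint is q−1 and whose size satisfies |I'| = 2^j · |I| for some integer j ≤ 0. Then I' ∈ 𝓘. -/
/-- The geometric interval family `𝓘`: the interval `[q,s]` belongs to `𝓘` iff
`q = i·2^k` and `s = (i+1)·2^k − 1` for some `k ≥ 0` and `i ≥ 1`. -/
def IsGeo (q s : ℕ) : Prop :=
  ∃ k i : ℕ, 1 ≤ i ∧ q = i * 2 ^ k ∧ s = (i + 1) * 2 ^ k - 1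

/-! The size of `[q', q - 1]` divides the size `2^k` of `[q, s]`, so it is `2^l` with `l ≤ k`.
Since `2^k ∣ q`, also `2^l ∣ q - 2^l = q'`, and a left endpoint divisible by the (power of two)
size is exactly what membership in `𝓘` asks for. -/

theorem isGeo_iff {a b : ℕ} : IsGeo a b ↔ 1 ≤ a ∧ ∃ k, b + 1 = a + 2 ^ k ∧ 2 ^ k ∣ a := by
  constructor
  · rintro ⟨k, i, hi, rfl, rfl⟩
    have hpos : 1 ≤ i * 2 ^ k := Nat.mul_le_mul hi Nat.one_le_two_pow
    exact ⟨hpos, k, by rw [add_mul, one_mul, Nat.sub_add_cancel (le_add_right hpos)], Dvd.intro_left i rfl⟩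
  · rintro ⟨ha, k, hb, i, rfl⟩
    refine ⟨k, i, ?_, mul_comm _ _, ?_⟩
    · exact Nat.pos_of_ne_zero (by rintro rfl; simp at ha)
    · rw [add_mul, one_mul, mul_comm]; omega

/-- Let `[q,s] ∈ 𝓘` and let `[q', q−1]` be an interval of positive naturals whose
right endpoint is `q − 1` and whose size satisfies `|[q,s]| = 2^m · |[q', q−1]|` for
some `m ≥ 0` (i.e. `|[q', q−1]| = 2^j·|[q,s]|` with `j = −m ≤ 0`). Then `[q', q−1] ∈ 𝓘`. -/
theorem left_interval_mem_geo (q s q' : ℕ) (h : IsGeo q s)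
    (hq' : 1 ≤ q') (hle : q' ≤ q - 1)
    (hsize : ∃ m : ℕ, s - q + 1 = 2 ^ m * ((q - 1) - q' + 1)) :
    IsGeo q' (q - 1) := by
  obtain ⟨hq, k, hs, hdvd⟩ := isGeo_iff.1 h
  obtain ⟨m, hm⟩ := hsize
  have hsize' : q - q' ∣ 2 ^ k := by
    rw [show (q - 1) - q' + 1 = q - q' by omega] at hm
    exact Dvd.intro_left (2 ^ m) (by omega)
  obtain ⟨l, hlk, hl⟩ := (Nat.dvd_prime_pow Nat.prime_two).1 hsize'
  refine isGeo_iff.2 ⟨hq', l, by omega, ?_⟩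
  rw [show q' = q - 2 ^ l by omega]
  exact Nat.dvd_sub ((pow_dvd_pow 2 hlk).trans hdvd) dvd_rfl
end

section
/- Every interval I = [q,s] of positive natural numbers (1 ≤ q ≤ s) can be partitioned into finitely many pairwise disjoint consecutive intervals I_{−k}, I_{−k+1}, …, I_{−1}, I_0, I_1, …, I_p (listed from left to right, with union equal to I), all belonging to the geometric interval family 𝓘, such that |I_{−i}| / |I_{−i+1}| ≤ 1/2 for every i with 1 ≤ i ≤ k, and |I_i| / |I_{i−1}| ≤ 1/2 for every i with 2 ≤ i ≤ p. -/
/-!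
Cover `[q, s]` greedily from the left: at the current point `q` take the largest dyadic block
`[q, q + 2^g - 1]` with `2^g ∣ q` that still fits. While the block is limited by the
divisibility of `q`, the next point `q + 2^g` is divisible by `2^(g+1)`, so the blocks at
least double. Once a block is limited by the remaining length, `2^L` with `L = log₂ len`, the
remainder is shorter than `2^L` and the blocks from then on follow the binary digits of the
remainder, so they at least halve. The only step not controlled by either phase is the one
from the last divisibility-limited block to the first length-limited one, which is the step
from `I_0` to `I_1`.
-/

lemma isGeo_of_two_pow_dvd {q g : ℕ} (hq : 1 ≤ q) (hdvd : 2 ^ g ∣ q) :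
    IsGeo q (q + 2 ^ g - 1) := by
  obtain ⟨i, rfl⟩ := hdvd
  refine ⟨g, i, Nat.pos_of_ne_zero ?_, mul_comm _ _, ?_⟩
  · rintro rfl
    simp at hq
  · rw [add_mul, one_mul, mul_comm]

lemma two_pow_succ_dvd_add_two_pow_padicValNat {q : ℕ} (hq : q ≠ 0) :
    2 ^ (padicValNat 2 q + 1) ∣ q + 2 ^ padicValNat 2 q := by
  have hnot := pow_succ_padicValNat_not_dvd (p := 2) hq
  obtain ⟨m, hm⟩ := pow_padicValNat_dvd (p := 2) (n := q)
  generalize padicValNat 2 q = v at hnot hm ⊢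
  subst hm
  have hm_odd : ¬ 2 ∣ m := fun ⟨c, hc⟩ => hnot ⟨c, by rw [hc, pow_succ, mul_assoc]⟩
  obtain ⟨c, hc⟩ : 2 ∣ m + 1 := by omega
  exact ⟨c, by rw [← mul_add_one, hc, pow_succ, mul_assoc]⟩

def blockSize (b : ℕ × ℕ) : ℕ := b.2 - b.1 + 1

lemma blockSize_dyadic (q g : ℕ) : blockSize (q, q + 2 ^ g - 1) = 2 ^ g := by
  have := Nat.one_le_two_pow (n := g)
  simp only [blockSize]
  omega

structure IsGeoCover (q s n : ℕ) (e : ℕ → ℕ × ℕ) : Prop where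
  pos : 0 < n
  fst_zero : (e 0).1 = q
  snd_last : (e (n - 1)).2 = s
  consecutive : ∀ i, i + 1 < n → (e (i + 1)).1 = (e i).2 + 1
  isGeo : ∀ i, i < n → IsGeo (e i).1 (e i).2

def consBlock (b : ℕ × ℕ) (e : ℕ → ℕ × ℕ) : ℕ → ℕ × ℕ
  | 0 => b
  | i + 1 => e i

@[simp] lemma consBlock_zero (b : ℕ × ℕ) (e : ℕ → ℕ × ℕ) : consBlock b e 0 = b := rfl

@[simp] lemma consBlock_succ (b : ℕ × ℕ) (e : ℕ → ℕ × ℕ) (i : ℕ) :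
    consBlock b e (i + 1) = e i := rfl

namespace IsGeoCover

lemma dyadic {q g : ℕ} (hq : 1 ≤ q) (hdvd : 2 ^ g ∣ q) :
    IsGeoCover q (q + 2 ^ g - 1) 1 (fun _ => (q, q + 2 ^ g - 1)) where
  pos := one_pos
  fst_zero := rfl
  snd_last := rfl
  consecutive _ _ := by omega
  isGeo _ _ := isGeo_of_two_pow_dvd hq hdvd

lemma cons {q m s n : ℕ} {e : ℕ → ℕ × ℕ} (hb : IsGeo q m) (he : IsGeoCover (m + 1) s n e) :
    IsGeoCover q s (n + 1) (consBlock (q, m) e) where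
  pos := Nat.succ_pos n
  fst_zero := rfl
  snd_last := by
    obtain ⟨k, hk⟩ := Nat.exists_eq_add_one.mpr he.pos
    simpa [hk] using he.snd_last
  consecutive
    | 0, _ => he.fst_zero
    | i + 1, hi => he.consecutive i (by omega)
  isGeo
    | 0, _ => hb
    | i + 1, hi => he.isGeo i (by omega)

lemma cons_dyadic {q g len n : ℕ} {e : ℕ → ℕ × ℕ} (hq : 1 ≤ q) (hdvd : 2 ^ g ∣ q)
    (hlt : 2 ^ g < len) (he : IsGeoCover (q + 2 ^ g) (q + 2 ^ g + (len - 2 ^ g) - 1) n e) :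
    IsGeoCover q (q + len - 1) (n + 1) (consBlock (q, q + 2 ^ g - 1) e) := by
  refine cons (isGeo_of_two_pow_dvd hq hdvd) ?_
  convert he using 1 <;> omega

end IsGeoCover

lemma exists_halving_geoCover (len q : ℕ) (hq : 1 ≤ q) (hlen : 0 < len)
    (hdvd : 2 ^ Nat.log 2 len ∣ q) :
    ∃ n e, IsGeoCover q (q + len - 1) n e ∧
      (∀ i, i + 1 < n → 2 * blockSize (e (i + 1)) ≤ blockSize (e i)) ∧
      blockSize (e 0) = 2 ^ Nat.log 2 len := by
  induction len using Nat.strong_induction_on generalizing q with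
  | _ len ih =>
  set L := Nat.log 2 len
  have hL_le : 2 ^ L ≤ len := Nat.pow_log_le_self 2 hlen.ne'
  have hlt_L : len < 2 * 2 ^ L := by
    have := Nat.lt_pow_succ_log_self (b := 2) one_lt_two len
    rwa [pow_succ, mul_comm] at this
  by_cases hrem : len = 2 ^ L
  · refine ⟨1, fun _ => (q, q + 2 ^ L - 1), ?_, fun i hi => by omega, blockSize_dyadic q L⟩
    rw [hrem]
    exact IsGeoCover.dyadic hq hdvd
  set r := len - 2 ^ L
  have hr_lt : r < 2 ^ L := by omega
  have hlog_r : Nat.log 2 r < L := Nat.log_lt_of_lt_pow (by omega) hr_lt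
  have hdvd_r : 2 ^ Nat.log 2 r ∣ q + 2 ^ L :=
    (Nat.pow_dvd_pow 2 hlog_r.le).trans (dvd_add hdvd dvd_rfl)
  obtain ⟨n, e, hcover, hhalf, hsize⟩ := ih r (by omega) (q + 2 ^ L) (by omega) (by omega) hdvd_r
  refine ⟨n + 1, consBlock (q, q + 2 ^ L - 1) e, ?_, ?_, blockSize_dyadic q L⟩
  · exact IsGeoCover.cons_dyadic hq hdvd (by omega) hcover
  · rintro (_ | i) hi
    · rw [consBlock_succ, consBlock_zero, hsize, blockSize_dyadic, ← pow_succ']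
      exact Nat.pow_le_pow_right two_pos hlog_r
    · exact hhalf i (by omega)

/-- The lower bound on the first block is the induction invariant: applied with `2 ^ (v + 1)`
after a block of size `2 ^ v`, it makes the blocks double. -/
lemma exists_unimodal_geoCover (len q g : ℕ) (hq : 1 ≤ q) (hdvd : 2 ^ g ∣ q)
    (hg : 2 ^ g ≤ len) :
    ∃ n k0 e, IsGeoCover q (q + len - 1) n e ∧ k0 < n ∧
      (∀ i, i + 1 ≤ k0 → 2 * blockSize (e i) ≤ blockSize (e (i + 1))) ∧
      (∀ i, k0 < i → i + 1 < n → 2 * blockSize (e (i + 1)) ≤ blockSize (e i)) ∧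
      2 ^ g ≤ blockSize (e 0) := by
  induction len using Nat.strong_induction_on generalizing q g with
  | _ len ih =>
  have hlen : 0 < len := lt_of_lt_of_le (Nat.two_pow_pos g) hg
  have hg_log : g ≤ Nat.log 2 len := Nat.le_log_of_pow_le one_lt_two hg
  by_cases hfit : 2 ^ Nat.log 2 len ∣ q
  · obtain ⟨n, e, hcover, hhalf, hsize⟩ := exists_halving_geoCover len q hq hlen hfit
    refine ⟨n, 0, e, hcover, hcover.pos, fun i hi => by omega, fun i _ hi => hhalf i hi, ?_⟩
    rw [hsize]
    exact Nat.pow_le_pow_right two_pos hg_log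
  set v := padicValNat 2 q
  have hv_dvd : 2 ^ v ∣ q := pow_padicValNat_dvd
  have hgv : g ≤ v := (padicValNat_dvd_iff_le (by omega)).mp hdvd
  have hv_log : v < Nat.log 2 len := by
    by_contra! h
    exact hfit ((Nat.pow_dvd_pow 2 h).trans hv_dvd)
  have hq' : 2 ^ (v + 1) ∣ q + 2 ^ v := two_pow_succ_dvd_add_two_pow_padicValNat (by omega)
  have hv_len : 2 * 2 ^ v ≤ len := by
    rw [← pow_succ']
    exact (Nat.pow_le_pow_right two_pos hv_log).trans (Nat.pow_log_le_self 2 hlen.ne')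
  set r := len - 2 ^ v
  have hfirst : 2 ^ g ≤ blockSize (q, q + 2 ^ v - 1) := by
    rw [blockSize_dyadic]
    exact Nat.pow_le_pow_right two_pos hgv
  by_cases hfit' : 2 ^ Nat.log 2 r ∣ q + 2 ^ v
  · obtain ⟨n, e, hcover, hhalf, -⟩ :=
      exists_halving_geoCover r (q + 2 ^ v) (by omega) (by omega) hfit'
    refine ⟨n + 1, 0, consBlock (q, q + 2 ^ v - 1) e, ?_, by omega, fun i hi => by omega, ?_, ?_⟩
    · exact IsGeoCover.cons_dyadic hq hv_dvd (by omega) hcover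
    · rintro (_ | i) h0 hi
      · omega
      · exact hhalf i (by omega)
    · exact hfirst
  have hr : 2 ^ (v + 1) ≤ r := by
    by_contra! h
    have hlog_r : Nat.log 2 r ≤ v := Nat.lt_succ_iff.mp (Nat.log_lt_of_lt_pow (by omega) h)
    exact hfit' ((Nat.pow_dvd_pow 2 (by omega)).trans hq')
  obtain ⟨n, k0, e, hcover, hk0, hdouble, hhalf, hsize⟩ :=
    ih r (by omega) (q + 2 ^ v) (v + 1) (by omega) hq' hr
  refine ⟨n + 1, k0 + 1, consBlock (q, q + 2 ^ v - 1) e,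
    IsGeoCover.cons_dyadic hq hv_dvd (by omega) hcover, by omega, ?_, ?_, hfirst⟩
  · rintro (_ | i) hi
    · rwa [consBlock_succ, consBlock_zero, blockSize_dyadic, ← pow_succ']
    · exact hdouble i (by omega)
  · rintro (_ | i) h0 hi
    · omega
    · exact hhalf i (by omega) (by omega)

/-- Geometric covering lemma: every interval `[q,s]` of positive naturals can be
partitioned into a finite sequence of pairwise disjoint consecutive intervals
`e 0, e 1, …, e (n−1)` (from left to right, with union `[q,s]`), all belonging to `𝓘`,
together with a distinguished position `k0` (the position of `I_0`), such that the
sizes strictly double going rightwards before position `k0` (this is the sequence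
`I_{−k}, …, I_0`, i.e. `|I_{−i}|/|I_{−i+1}| ≤ 1/2` for `1 ≤ i ≤ k`), and halve going
rightwards after position `k0 + 1` (this is the sequence `I_1, …, I_p`, i.e.
`|I_i|/|I_{i−1}| ≤ 1/2` for `2 ≤ i ≤ p`). -/
theorem geometric_covering (q s : ℕ) (hq : 1 ≤ q) (hqs : q ≤ s) :
    ∃ (n k0 : ℕ) (e : ℕ → ℕ × ℕ),
      0 < n ∧ k0 < n ∧
      (e 0).1 = q ∧ (e (n - 1)).2 = s ∧
      (∀ i, i + 1 < n → (e (i + 1)).1 = (e i).2 + 1) ∧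
      (∀ i, i < n → IsGeo (e i).1 (e i).2) ∧
      (∀ i, i + 1 ≤ k0 →
        2 * ((e i).2 - (e i).1 + 1) ≤ (e (i + 1)).2 - (e (i + 1)).1 + 1) ∧
      (∀ i, k0 + 1 < i → i < n →
        2 * ((e i).2 - (e i).1 + 1) ≤ (e (i - 1)).2 - (e (i - 1)).1 + 1) := by
  obtain ⟨n, k0, e, hcover, hk0, hdouble, hhalf, -⟩ :=
    exists_unimodal_geoCover (s + 1 - q) q 0 hq (one_dvd q) (by rw [pow_zero]; omega)
  refine ⟨n, k0, e, hcover.pos, hk0, hcover.fst_zero, ?_, hcover.consecutive, hcover.isGeo,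
    hdouble, ?_⟩
  · rw [hcover.snd_last]
    omega
  · rintro (_ | i) hi hn
    · omega
    · exact hhalf i (by omega) hn
end
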